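/- arXiv:1801.05584 — 4 statements merged into one kernel-verified Lean document; each statement's English description precedes it below -/
import Mathlib

section
/- For all real t with 0 < t < 1, the Bessel function of the first kind of order 1 satisfies 0 < J_1(t) < t/2. -/
/-- Bessel function of the first kind of order 1. -/
noncomputable def besselJ1 (t : ℝ) : ℝ :=
  ∑' p : ℕ, (-1 : ℝ)^p / ((Nat.factorial p : ℝ) * (Nat.factorial (1 + p) : ℝ)) * (t/2)^(1 + 2*p)

/-!
Writing `x = t / 2`, the series for `J₁(t)` is the alternating series `∑ (-1)ᵖ aₚ` with
`aₚ = x^(2p+1) / (p! (p+1)!)`. Since `aₚ₊₁ = x² / ((p+1)(p+2)) · aₚ`, the terms decrease as soon as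
`x² ≤ 2`, so the limit lies between consecutive partial sums:
`x - x³/2 ≤ J₁(t) ≤ x - x³/2 + x⁵/12`. For `0 < x < 1/2` both ends lie strictly inside `(0, x)`.
-/

open Finset Filter

noncomputable def besselJ1Term (x : ℝ) (p : ℕ) : ℝ :=
  x ^ (1 + 2 * p) / ((p.factorial : ℝ) * ((1 + p).factorial : ℝ))

lemma besselJ1_eq_tsum_neg_one_pow_mul (t : ℝ) :
    besselJ1 t = ∑' p : ℕ, (-1) ^ p * besselJ1Term (t / 2) p := by
  unfold besselJ1 besselJ1Term
  congr 1 with p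
  ring

lemma besselJ1Term_succ (x : ℝ) (p : ℕ) :
    besselJ1Term x (p + 1) = x ^ 2 / ((p + 1) * (p + 2)) * besselJ1Term x p := by
  simp only [besselJ1Term, show 1 + (p + 1) = (1 + p) + 1 by ring, Nat.factorial_succ]
  push_cast
  field_simp
  ring

lemma abs_besselJ1Term_le (x : ℝ) (p : ℕ) :
    |besselJ1Term x p| ≤ |x| * ((x ^ 2) ^ p / p.factorial) := by
  have hfac : (1 : ℝ) ≤ (1 + p).factorial := by exact_mod_cast (1 + p).factorial_pos
  rw [besselJ1Term, abs_div, abs_of_pos (by positivity : (0 : ℝ) < p.factorial * (1 + p).factorial),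
    abs_pow, pow_add, pow_one, pow_mul, sq_abs, mul_div_assoc, ← div_div]
  exact mul_le_mul_of_nonneg_left (div_le_self (by positivity) hfac) (abs_nonneg x)

lemma summable_besselJ1Term (x : ℝ) : Summable (besselJ1Term x) :=
  .of_norm_bounded ((Real.summable_pow_div_factorial (x ^ 2)).mul_left |x|)
    (abs_besselJ1Term_le x)

lemma antitone_besselJ1Term {x : ℝ} (hx : 0 ≤ x) (hx2 : x ^ 2 ≤ 2) :
    Antitone (besselJ1Term x) := by
  refine antitone_nat_of_succ_le fun p ↦ ?_
  rw [besselJ1Term_succ]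
  refine mul_le_of_le_one_left (by unfold besselJ1Term; positivity) ?_
  rw [div_le_one (by positivity)]
  nlinarith [(p.cast_nonneg : (0 : ℝ) ≤ p)]

section Bounds

variable {t : ℝ} (ht : 0 ≤ t) (ht2 : t ^ 2 ≤ 8)
include ht ht2

lemma sub_le_besselJ1 : t / 2 - (t / 2) ^ 3 / 2 ≤ besselJ1 t := by
  have h := (antitone_besselJ1Term (x := t / 2) (by positivity) (by nlinarith))
    |>.alternating_series_le_tendsto (summable_besselJ1Term _).tendsto_alternating_series_tsum 1
  rw [besselJ1_eq_tsum_neg_one_pow_mul]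
  refine le_trans (le_of_eq ?_) h
  simp only [sum_range_succ, sum_range_zero, besselJ1Term, Nat.factorial]
  push_cast
  ring

lemma besselJ1_le : besselJ1 t ≤ t / 2 - (t / 2) ^ 3 / 2 + (t / 2) ^ 5 / 12 := by
  have h := (antitone_besselJ1Term (x := t / 2) (by positivity) (by nlinarith))
    |>.tendsto_le_alternating_series (summable_besselJ1Term _).tendsto_alternating_series_tsum 1
  rw [besselJ1_eq_tsum_neg_one_pow_mul]
  refine le_trans h (le_of_eq ?_)
  simp only [sum_range_succ, sum_range_zero, besselJ1Term, Nat.factorial]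
  push_cast
  ring

end Bounds

theorem besselJ1_bounds (t : ℝ) (h0 : 0 < t) (h1 : t < 1) :
    0 < besselJ1 t ∧ besselJ1 t < t/2 := by
  have ht2 : t ^ 2 ≤ 8 := by nlinarith
  have hx3 : 0 < (t / 2) ^ 3 := by positivity
  constructor
  · refine lt_of_lt_of_le ?_ (sub_le_besselJ1 h0.le ht2)
    nlinarith
  · refine lt_of_le_of_lt (besselJ1_le h0.le ht2) ?_
    nlinarith
end

section
/- For all real t with 0 < t < 1, the spherical Bessel function of order 2 satisfies 0 < j_2(t) < t^2/15. -/
/-!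
Clearing denominators, `t³ j₂(t) = g(t) := (3 - t²) sin t - 3t cos t`. One computes
`g' = t h` with `h(t) = sin t - t cos t`, and `h' = t sin t`. Hence `0 < sin t < t` on `(0, π)`
integrates, from `g(0) = h(0) = 0`, to `0 < h(t) < t³/3` and then to `0 < g(t) < t⁵/15`.
-/

/-- Spherical Bessel function of order 2. -/
noncomputable def sphBesselj2 (t : ℝ) : ℝ :=
  (3/t^3 - 1/t) * Real.sin t - (3/t^2) * Real.cos t

open Real Set

lemma pos_of_hasDerivAt_of_eq_zero {f f' : ℝ → ℝ} (hf : ∀ y, HasDerivAt f (f' y) y)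
    (hf0 : f 0 = 0) {x : ℝ} (hx : 0 < x) (hf' : ∀ y ∈ Ioo 0 x, 0 < f' y) : 0 < f x := by
  have hmono : StrictMonoOn f (Icc 0 x) := by
    refine strictMonoOn_of_deriv_pos (convex_Icc 0 x)
      (fun y _ => (hf y).continuousAt.continuousWithinAt) fun y hy => ?_
    rw [interior_Icc] at hy
    exact (hf y).deriv ▸ hf' y hy
  simpa [hf0] using hmono (left_mem_Icc.2 hx.le) (right_mem_Icc.2 hx.le) hx

lemma hasDerivAt_sin_sub_mul_cos (x : ℝ) :
    HasDerivAt (fun y => sin y - y * cos y) (x * sin x) x :=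
  ((hasDerivAt_sin x).sub ((hasDerivAt_id' x).mul (hasDerivAt_cos x))).congr_deriv (by ring)

lemma hasDerivAt_three_sub_sq_mul_sin_sub_mul_cos (x : ℝ) :
    HasDerivAt (fun y => (3 - y ^ 2) * sin y - 3 * y * cos y) (x * (sin x - x * cos x)) x :=
  ((((hasDerivAt_const x 3).sub (hasDerivAt_pow 2 x)).mul (hasDerivAt_sin x)).sub
    (((hasDerivAt_id' x).const_mul 3).mul (hasDerivAt_cos x))).congr_deriv
    (by simp only [Nat.cast_ofNat, Nat.add_one_sub_one, Pi.sub_apply]; ring)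

lemma sin_sub_mul_cos_pos {x : ℝ} (hx0 : 0 < x) (hxπ : x ≤ π) : 0 < sin x - x * cos x :=
  pos_of_hasDerivAt_of_eq_zero hasDerivAt_sin_sub_mul_cos (by simp) hx0 fun y hy =>
    mul_pos hy.1 (sin_pos_of_pos_of_lt_pi hy.1 (hy.2.trans_le hxπ))

lemma sin_sub_mul_cos_lt {x : ℝ} (hx : 0 < x) : sin x - x * cos x < x ^ 3 / 3 := by
  have hderiv (y : ℝ) : HasDerivAt (fun y => y ^ 3 / 3 - (sin y - y * cos y))
      (y * (y - sin y)) y :=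
    (((hasDerivAt_pow 3 y).div_const 3).sub (hasDerivAt_sin_sub_mul_cos y)).congr_deriv
      (by simp only [Nat.cast_ofNat, Nat.add_one_sub_one]; ring)
  have := pos_of_hasDerivAt_of_eq_zero hderiv (by simp) hx fun y hy =>
    mul_pos hy.1 (sub_pos.2 (sin_lt hy.1))
  linarith

lemma three_sub_sq_mul_sin_sub_mul_cos_pos {x : ℝ} (hx0 : 0 < x) (hxπ : x ≤ π) :
    0 < (3 - x ^ 2) * sin x - 3 * x * cos x :=
  pos_of_hasDerivAt_of_eq_zero hasDerivAt_three_sub_sq_mul_sin_sub_mul_cos (by simp) hx0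
    fun y hy => mul_pos hy.1 (sin_sub_mul_cos_pos hy.1 (hy.2.le.trans hxπ))

lemma three_sub_sq_mul_sin_sub_mul_cos_lt {x : ℝ} (hx : 0 < x) :
    (3 - x ^ 2) * sin x - 3 * x * cos x < x ^ 5 / 15 := by
  have hderiv (y : ℝ) : HasDerivAt (fun y => y ^ 5 / 15 - ((3 - y ^ 2) * sin y - 3 * y * cos y))
      (y * (y ^ 3 / 3 - (sin y - y * cos y))) y :=
    (((hasDerivAt_pow 5 y).div_const 15).sub
      (hasDerivAt_three_sub_sq_mul_sin_sub_mul_cos y)).congr_deriv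
      (by simp only [Nat.cast_ofNat, Nat.add_one_sub_one]; ring)
  have := pos_of_hasDerivAt_of_eq_zero hderiv (by simp) hx fun y hy =>
    mul_pos hy.1 (sub_pos.2 (sin_sub_mul_cos_lt hy.1))
  linarith

lemma sphBesselj2_eq_div {t : ℝ} (ht : t ≠ 0) :
    sphBesselj2 t = ((3 - t ^ 2) * sin t - 3 * t * cos t) / t ^ 3 := by
  unfold sphBesselj2
  field_simp

theorem sphBesselj2_bounds (t : ℝ) (h0 : 0 < t) (h1 : t < 1) :
    0 < sphBesselj2 t ∧ sphBesselj2 t < t^2/15 := by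
  have htπ : t ≤ π := by linarith [pi_gt_three]
  rw [sphBesselj2_eq_div h0.ne']
  constructor
  · exact div_pos (three_sub_sq_mul_sin_sub_mul_cos_pos h0 htπ) (by positivity)
  · calc _ < t ^ 5 / 15 / t ^ 3 :=
          div_lt_div_of_pos_right (three_sub_sq_mul_sin_sub_mul_cos_lt h0) (by positivity)
      _ = t ^ 2 / 15 := by field_simp
end

section
/- For every nonzero z in R^3 and every k > 0, \int_{S^2} d_3 e^{i k d\cdot z} ds(d) = 4\pi i j_1(k|z|) cos(\alpha), where d = (d_1,d_2,d_3) \in S^2, \alpha is the polar angle of z (so cos \alpha = z_3/|z|), and j_1 is the spherical Bessel function of order 1. -/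
open Real MeasureTheory

/-- Spherical Bessel function of order 1. -/
noncomputable def sphBesselj1 (t : ℝ) : ℝ := Real.sin t / t^2 - Real.cos t / t

/-!
Rotating in `φ` turns the integral into
`F(x, y) = ∫∫ cos θ · exp (i (x sin θ cos φ + y cos θ)) · sin θ` with `x = k √(z₀² + z₁²)` and
`y = k z₂`. Expanding the exponential, `F` is the exponential series of the moments
`∫∫ cos θ · (x sin θ cos φ + y cos θ)ⁿ · sin θ`. By the binomial theorem and Beta-type integrals
these vanish for even `n` and equal `4π y (x² + y²)ˢ / (2s + 3)` for `n = 2s + 1`, which is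
termwise the Taylor series of `4π i j₁(r) y / r` with `r = √(x² + y²)`.
-/

open Finset

theorem Finset.sum_range_two_mul {M : Type*} [AddCommMonoid M] (f : ℕ → M) (n : ℕ) :
    ∑ j ∈ range (2 * n), f j = ∑ j ∈ range n, f (2 * j) + ∑ j ∈ range n, f (2 * j + 1) := by
  induction n with
  | zero => simp
  | succ n ih =>
    rw [show 2 * (n + 1) = 2 * n + 1 + 1 by ring, sum_range_succ, sum_range_succ, ih,
      sum_range_succ, sum_range_succ]
    abel

theorem intervalIntegral.hasSum_integral_of_norm_le_const {ι E : Type*} [Countable ι]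
    [NormedAddCommGroup E] [NormedSpace ℝ E] {F : ι → ℝ → E} {f : ℝ → E} {C : ι → ℝ} {a b : ℝ}
    (hF : ∀ i, Continuous (F i)) (hC : Summable C) (hFC : ∀ i t, ‖F i t‖ ≤ C i)
    (hf : ∀ t, HasSum (F · t) (f t)) :
    HasSum (fun i => ∫ t in a..b, F i t) (∫ t in a..b, f t) :=
  hasSum_integral_of_dominated_convergence (fun i _ => C i)
    (fun i => (hF i).aestronglyMeasurable) (fun i => ae_of_all _ fun t _ => hFC i t)
    (ae_of_all _ fun _ _ => hC) intervalIntegrable_const (ae_of_all _ fun t _ => hf t)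

theorem intervalIntegral.integral_comp_mul_cos_add_mul_sin {E : Type*} [NormedAddCommGroup E]
    [NormedSpace ℝ E] (f : ℝ → E) (a b : ℝ) :
    ∫ φ in (0:ℝ)..2 * π, f (a * cos φ + b * sin φ)
      = ∫ φ in (0:ℝ)..2 * π, f (√(a ^ 2 + b ^ 2) * cos φ) := by
  set w : ℂ := ⟨a, b⟩
  have hr : ‖w‖ = √(a ^ 2 + b ^ 2) := by simp [Complex.norm_def, Complex.normSq_apply, w, sq]
  have hrot (φ : ℝ) : a * cos φ + b * sin φ = √(a ^ 2 + b ^ 2) * cos (φ - w.arg) := by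
    have hre : ‖w‖ * cos w.arg = a := Complex.norm_mul_cos_arg w
    have him : ‖w‖ * sin w.arg = b := Complex.norm_mul_sin_arg w
    rw [← hr, cos_sub]
    linear_combination (-cos φ) * hre - sin φ * him
  have hper : Function.Periodic (fun φ => f (√(a ^ 2 + b ^ 2) * cos φ)) (2 * π) := by
    intro φ
    simp [cos_add_two_pi]
  simp_rw [hrot]
  rw [integral_comp_sub_right (fun φ => f (√(a ^ 2 + b ^ 2) * cos φ)), zero_sub,
    show 2 * π - w.arg = -w.arg + 2 * π by ring, hper.intervalIntegral_add_eq _ 0, zero_add]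

theorem integral_cos_pow_add_two_two_pi (n : ℕ) :
    ∫ x in (0:ℝ)..2 * π, cos x ^ (n + 2) = (n + 1) / (n + 2) * ∫ x in (0:ℝ)..2 * π, cos x ^ n := by
  simp [integral_cos_pow]

theorem integral_cos_pow_odd_two_pi (m : ℕ) : ∫ x in (0:ℝ)..2 * π, cos x ^ (2 * m + 1) = 0 := by
  induction m with
  | zero => simp
  | succ m ih =>
    rw [show 2 * (m + 1) + 1 = 2 * m + 1 + 2 by ring, integral_cos_pow_add_two_two_pi, ih, mul_zero]

theorem integral_zero_pi_sin_pow_odd_mul_cos_pow (m q : ℕ) :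
    ∫ θ in (0:ℝ)..π, sin θ ^ (2 * m + 1) * cos θ ^ q
      = ∫ u in (-1:ℝ)..1, u ^ q * (1 - u ^ 2) ^ m := by
  rw [integral_sin_pow_odd_mul_cos_pow, cos_pi, cos_zero]

theorem integral_neg_one_one_pow_odd_mul_one_sub_sq_pow (q m : ℕ) :
    ∫ u in (-1:ℝ)..1, u ^ (2 * q + 1) * (1 - u ^ 2) ^ m = 0 := by
  have h := intervalIntegral.integral_comp_neg (a := (-1:ℝ)) (b := 1)
    fun u => u ^ (2 * q + 1) * (1 - u ^ 2) ^ m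
  simp only [neg_neg, Odd.neg_pow ⟨q, rfl⟩, even_two, Even.neg_pow, neg_mul,
    intervalIntegral.integral_neg] at h
  linarith

section Factorial

open scoped Nat

theorem integral_cos_pow_even_two_pi (m : ℕ) :
    ∫ x in (0:ℝ)..2 * π, cos x ^ (2 * m) = 2 * π * (2 * m)! / (4 ^ m * (m ! : ℝ) ^ 2) := by
  induction m with
  | zero => simp
  | succ m ih =>
    rw [show 2 * (m + 1) = 2 * m + 2 by ring, integral_cos_pow_add_two_two_pi, ih,
      Nat.factorial_succ, Nat.factorial_succ, Nat.factorial_succ]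
    push_cast
    field_simp
    ring

theorem integral_neg_one_one_pow_even_mul_one_sub_sq_pow (m c : ℕ) :
    ∫ u in (-1:ℝ)..1, u ^ (2 * c) * (1 - u ^ 2) ^ m
      = 2 ^ (2 * m + 1) * (2 * c)! * m ! * (c + m)! / (c ! * (2 * c + 2 * m + 1)! : ℝ) := by
  induction m generalizing c with
  | zero =>
    have h : (-1:ℝ) ^ (2 * c + 1) = -1 := Odd.neg_one_pow ⟨c, rfl⟩
    simp only [pow_zero, mul_one, integral_pow, one_pow, h, add_zero, Nat.factorial_succ]
    push_cast
    field_simp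
    ring
  | succ m ih =>
    have hsplit : ∫ u in (-1:ℝ)..1, u ^ (2 * c) * (1 - u ^ 2) ^ (m + 1)
        = (∫ u in (-1:ℝ)..1, u ^ (2 * c) * (1 - u ^ 2) ^ m)
          - ∫ u in (-1:ℝ)..1, u ^ (2 * (c + 1)) * (1 - u ^ 2) ^ m := by
      rw [← intervalIntegral.integral_sub (by apply Continuous.intervalIntegrable; fun_prop)
        (by apply Continuous.intervalIntegrable; fun_prop)]
      congr 1 with u
      ring
    rw [hsplit, ih, ih, show 2 * (c + 1) = 2 * c + 1 + 1 by ring,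
      show c + (m + 1) = c + m + 1 by ring, show c + 1 + m = c + m + 1 by ring,
      show 2 * c + 2 * (m + 1) + 1 = 2 * c + 2 * m + 1 + 1 + 1 by ring,
      show 2 * c + 1 + 1 + 2 * m + 1 = 2 * c + 2 * m + 1 + 1 + 1 by ring]
    simp only [Nat.factorial_succ]
    push_cast
    field_simp
    ring

theorem choose_mul_integral_cos_pow_mul_integral_pow_mul_one_sub_sq_pow (m d : ℕ) :
    ((2 * (m + d) + 1).choose (2 * m) : ℝ) * (∫ x in (0:ℝ)..2 * π, cos x ^ (2 * m))
        * (∫ u in (-1:ℝ)..1, u ^ (2 * (d + 1)) * (1 - u ^ 2) ^ m)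
      = 4 * π / (2 * (m + d) + 3) * (m + d).choose m := by
  rw [integral_cos_pow_even_two_pi, integral_neg_one_one_pow_even_mul_one_sub_sq_pow,
    Nat.cast_choose ℝ (by omega : 2 * m ≤ 2 * (m + d) + 1),
    Nat.cast_choose ℝ (by omega : m ≤ m + d),
    show 2 * (m + d) + 1 - 2 * m = 2 * d + 1 by omega, show m + d - m = d by omega,
    show 2 * (d + 1) + 2 * m + 1 = 2 * (m + d) + 1 + 1 + 1 by ring,
    show 2 * (d + 1) = 2 * d + 1 + 1 by ring, show d + 1 + m = m + d + 1 by ring,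
    show (2:ℝ) ^ (2 * m + 1) = 2 * 4 ^ m by rw [pow_succ, pow_mul]; norm_num; ring]
  simp only [Nat.factorial_succ]
  push_cast
  field_simp
  ring

theorem hasSum_sphBesselj1 {t : ℝ} (ht : t ≠ 0) :
    HasSum (fun s : ℕ => (-1) ^ s * t ^ (2 * s + 1) / ((2 * s + 1)! * (2 * s + 3)))
      (sphBesselj1 t) := by
  have hsc := (hasSum_nat_add_iff' 1).mpr ((hasSum_sin t).sub ((hasSum_cos t).mul_left t))
  have hval : sphBesselj1 t = (sin t - t * cos t - ∑ n ∈ range 1,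
      ((-1) ^ n * t ^ (2 * n + 1) / (2 * n + 1)! - t * ((-1) ^ n * t ^ (2 * n) / (2 * n)!)))
        / t ^ 2 := by
    rw [sum_range_one, sphBesselj1]
    field_simp
    norm_num
  rw [hval]
  refine (hsc.div_const (t ^ 2)).congr_fun fun s => ?_
  rw [show 2 * (s + 1) + 1 = 2 * s + 1 + 1 + 1 by ring, show 2 * (s + 1) = 2 * s + 1 + 1 by ring]
  simp only [Nat.factorial_succ]
  push_cast
  field_simp
  ring

end Factorial

noncomputable def sphereCosMoment (x y : ℝ) (n : ℕ) : ℝ :=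
  ∫ θ in (0:ℝ)..π, ∫ φ in (0:ℝ)..2 * π, cos θ * (x * sin θ * cos φ + y * cos θ) ^ n * sin θ

theorem sphereCosMoment_eq_sum (x y : ℝ) (n : ℕ) :
    sphereCosMoment x y n = ∑ j ∈ range (n + 1), x ^ j * y ^ (n - j) * n.choose j
      * (∫ φ in (0:ℝ)..2 * π, cos φ ^ j)
      * ∫ θ in (0:ℝ)..π, sin θ ^ (j + 1) * cos θ ^ (n - j + 1) := by
  have hinner (θ : ℝ) :
      ∫ φ in (0:ℝ)..2 * π, cos θ * (x * sin θ * cos φ + y * cos θ) ^ n * sin θ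
        = ∑ j ∈ range (n + 1), (x ^ j * y ^ (n - j) * n.choose j
            * (sin θ ^ (j + 1) * cos θ ^ (n - j + 1))) * ∫ φ in (0:ℝ)..2 * π, cos φ ^ j := by
    simp only [add_pow, mul_sum, sum_mul]
    rw [intervalIntegral.integral_finsetSum fun j _ => by
      apply Continuous.intervalIntegrable; fun_prop]
    refine sum_congr rfl fun j _ => ?_
    rw [← intervalIntegral.integral_const_mul]
    congr 1 with φ
    ring
  simp_rw [sphereCosMoment, hinner]
  rw [intervalIntegral.integral_finsetSum fun j _ => by
    apply Continuous.intervalIntegrable; fun_prop]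
  refine sum_congr rfl fun j _ => ?_
  rw [intervalIntegral.integral_mul_const, intervalIntegral.integral_const_mul]
  ring

theorem sphereCosMoment_even (x y : ℝ) (s : ℕ) : sphereCosMoment x y (2 * s) = 0 := by
  rw [sphereCosMoment_eq_sum]
  refine sum_eq_zero fun j hj => ?_
  obtain ⟨m, rfl | rfl⟩ := Nat.even_or_odd' j
  · have hm : m ≤ s := by rw [mem_range] at hj; omega
    rw [integral_zero_pi_sin_pow_odd_mul_cos_pow, show 2 * s - 2 * m + 1 = 2 * (s - m) + 1 by omega,
      integral_neg_one_one_pow_odd_mul_one_sub_sq_pow, mul_zero]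
  · rw [integral_cos_pow_odd_two_pi, mul_zero, zero_mul]

theorem sphereCosMoment_odd (x y : ℝ) (s : ℕ) :
    sphereCosMoment x y (2 * s + 1) = 4 * π * y * (x ^ 2 + y ^ 2) ^ s / (2 * s + 3) := by
  rw [sphereCosMoment_eq_sum, show 2 * s + 1 + 1 = 2 * (s + 1) by ring, sum_range_two_mul]
  simp only [integral_cos_pow_odd_two_pi, mul_zero, zero_mul, sum_const_zero, add_zero]
  have hterm : ∀ m ∈ range (s + 1),
      x ^ (2 * m) * y ^ (2 * s + 1 - 2 * m) * ((2 * s + 1).choose (2 * m) : ℝ)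
        * (∫ φ in (0:ℝ)..2 * π, cos φ ^ (2 * m))
        * (∫ θ in (0:ℝ)..π, sin θ ^ (2 * m + 1) * cos θ ^ (2 * s + 1 - 2 * m + 1))
      = 4 * π / (2 * s + 3) * y * ((x ^ 2) ^ m * (y ^ 2) ^ (s - m) * s.choose m) := by
    intro m hm
    obtain ⟨d, rfl⟩ : ∃ d, s = m + d := ⟨s - m, by rw [mem_range] at hm; omega⟩
    rw [integral_zero_pi_sin_pow_odd_mul_cos_pow,
      show 2 * (m + d) + 1 - 2 * m + 1 = 2 * (d + 1) by omega,
      show 2 * (m + d) + 1 - 2 * m = 2 * d + 1 by omega, show m + d - m = d by omega]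
    push_cast
    linear_combination x ^ (2 * m) * y ^ (2 * d + 1)
      * choose_mul_integral_cos_pow_mul_integral_pow_mul_one_sub_sq_pow m d
  rw [sum_congr rfl hterm, ← mul_sum, ← add_pow]
  ring

theorem hasSum_sphereCosMoment (x y : ℝ) :
    HasSum (fun n => Complex.I ^ n / n.factorial * (sphereCosMoment x y n : ℂ))
      (∫ θ in (0:ℝ)..π, ∫ φ in (0:ℝ)..2 * π,
        (cos θ : ℂ) * Complex.exp (Complex.I * (x * sin θ * cos φ + y * cos θ : ℝ))
          * (sin θ : ℂ)) := by
  set R := |x| + |y|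
  set F : ℕ → ℝ → ℝ → ℂ := fun n θ φ =>
    Complex.I ^ n / n.factorial * (cos θ * (x * sin θ * cos φ + y * cos θ) ^ n * sin θ : ℝ)
  have hF (n : ℕ) (θ φ : ℝ) : ‖F n θ φ‖ ≤ R ^ n / n.factorial := by
    have hg : |x * sin θ * cos φ + y * cos θ| ≤ R := by
      grw [abs_add_le, abs_mul, abs_mul, abs_mul, abs_sin_le_one, abs_cos_le_one, abs_cos_le_one]
      simp [R]
    have hcs : |cos θ| * |sin θ| ≤ 1 :=
      mul_le_one₀ (abs_cos_le_one θ) (abs_nonneg _) (abs_sin_le_one θ)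
    simp only [F, norm_mul, norm_div, norm_pow, Complex.norm_I, one_pow, Complex.norm_natCast,
      Complex.norm_real, Real.norm_eq_abs]
    rw [one_div_mul_eq_div, mul_right_comm]
    gcongr
    calc |cos θ| * |sin θ| * |x * sin θ * cos φ + y * cos θ| ^ n ≤ 1 * R ^ n := by gcongr
      _ = R ^ n := one_mul _
  have hexp (θ φ : ℝ) : HasSum (F · θ φ)
      ((cos θ : ℂ) * Complex.exp (Complex.I * (x * sin θ * cos φ + y * cos θ : ℝ))
        * (sin θ : ℂ)) := by
    rw [Complex.exp_eq_exp_ℂ]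
    refine (((NormedSpace.expSeries_div_hasSum_exp _).mul_left (cos θ : ℂ)).mul_right
      (sin θ : ℂ)).congr_fun fun n => ?_
    simp only [F, mul_pow]
    push_cast
    ring
  have hinner (θ : ℝ) := intervalIntegral.hasSum_integral_of_norm_le_const (a := 0) (b := 2 * π)
    (fun n => by fun_prop) (Real.summable_pow_div_factorial R) (hF · θ) (hexp θ)
  have houter := intervalIntegral.hasSum_integral_of_norm_le_const (a := 0) (b := π)
    (fun n => by fun_prop) ((Real.summable_pow_div_factorial R).mul_left (2 * π))
    (fun n θ => by
      refine (intervalIntegral.norm_integral_le_of_norm_le_const fun φ _ => hF n θ φ).trans_eq ?_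
      rw [sub_zero, abs_of_pos two_pi_pos, mul_comm]) hinner
  refine houter.congr_fun fun n => ?_
  simp only [F, intervalIntegral.integral_const_mul, intervalIntegral.integral_ofReal,
    sphereCosMoment]

theorem integral_sphere_cos_mul_exp (x y : ℝ) (h : √(x ^ 2 + y ^ 2) ≠ 0) :
    ∫ θ in (0:ℝ)..π, ∫ φ in (0:ℝ)..2 * π,
        (cos θ : ℂ) * Complex.exp (Complex.I * (x * sin θ * cos φ + y * cos θ : ℝ)) * (sin θ : ℂ)
      = 4 * π * Complex.I * sphBesselj1 √(x ^ 2 + y ^ 2) * (y / √(x ^ 2 + y ^ 2) : ℝ) := by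
  set r := √(x ^ 2 + y ^ 2)
  have hr : x ^ 2 + y ^ 2 = r ^ 2 := (sq_sqrt (by positivity)).symm
  have hr' : (r : ℂ) ≠ 0 := by exact_mod_cast h
  have heven : HasSum (fun s => Complex.I ^ (2 * s) / (2 * s).factorial
      * (sphereCosMoment x y (2 * s) : ℂ)) 0 := by
    simpa only [sphereCosMoment_even, Complex.ofReal_zero, mul_zero] using hasSum_zero
  have hodd : HasSum (fun s => Complex.I ^ (2 * s + 1) / (2 * s + 1).factorial
      * (sphereCosMoment x y (2 * s + 1) : ℂ)) (4 * π * Complex.I * y / r * sphBesselj1 r) :=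
    ((Complex.hasSum_ofReal.mpr (hasSum_sphBesselj1 h)).mul_left _).congr_fun fun s => by
      have hs : (2 * s + 3 : ℂ) ≠ 0 := by exact_mod_cast (by omega : 2 * s + 3 ≠ 0)
      rw [sphereCosMoment_odd, hr, pow_succ, pow_mul, Complex.I_sq]
      push_cast
      field_simp
      ring
  have hsum := HasSum.even_add_odd
    (f := fun n => Complex.I ^ n / n.factorial * (sphereCosMoment x y n : ℂ)) heven hodd
  rw [(hasSum_sphereCosMoment x y).unique hsum, zero_add]
  push_cast
  ring

theorem integral_cos_mul_exp_mul_sin_rotate (a b c θ : ℝ) (hθ : 0 ≤ sin θ) :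
    ∫ φ in (0:ℝ)..2 * π, (cos θ : ℂ)
        * Complex.exp (Complex.I * (a * sin θ * cos φ + b * sin θ * sin φ + c * cos θ : ℝ))
        * (sin θ : ℂ)
      = ∫ φ in (0:ℝ)..2 * π, (cos θ : ℂ)
          * Complex.exp (Complex.I * (√(a ^ 2 + b ^ 2) * sin θ * cos φ + c * cos θ : ℝ))
          * (sin θ : ℂ) := by
  have h := intervalIntegral.integral_comp_mul_cos_add_mul_sin
    (fun u => (cos θ : ℂ) * Complex.exp (Complex.I * (u + c * cos θ : ℝ)) * (sin θ : ℂ))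
    (a * sin θ) (b * sin θ)
  rw [show (a * sin θ) ^ 2 + (b * sin θ) ^ 2 = (a ^ 2 + b ^ 2) * sin θ ^ 2 by ring,
    sqrt_mul (by positivity), sqrt_sq hθ] at h
  simpa only [mul_right_comm _ (sin θ)] using h

/-- Integral of `d₃ e^{i k d·z}` over the unit sphere `S²` equals
`4π i j₁(k|z|) cos α`, where `cos α = z₃/|z|`. -/
theorem sphere_integral_d3_exp (z : EuclideanSpace ℝ (Fin 3)) (hz : z ≠ 0)
    (k : ℝ) (hk : 0 < k) (α : ℝ) (hα : Real.cos α = z 2 / ‖z‖) :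
    (∫ θ in (0:ℝ)..π, ∫ φ in (0:ℝ)..(2*π),
        (Real.cos θ : ℂ) * Complex.exp (Complex.I * (k * (Real.sin θ * Real.cos φ * z 0
          + Real.sin θ * Real.sin φ * z 1 + Real.cos θ * z 2))) * (Real.sin θ : ℂ))
      = 4 * π * Complex.I * (sphBesselj1 (k * ‖z‖) : ℝ) * (Real.cos α : ℝ) := by
  have hnorm : √((√((k * z 0) ^ 2 + (k * z 1) ^ 2)) ^ 2 + (k * z 2) ^ 2) = k * ‖z‖ := by
    rw [sq_sqrt (by positivity), ← sqrt_sq (by positivity : 0 ≤ k * ‖z‖), mul_pow k ‖z‖,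
      EuclideanSpace.norm_sq_eq, Fin.sum_univ_three]
    simp only [Real.norm_eq_abs, sq_abs]
    ring_nf
  have hkz : k * ‖z‖ ≠ 0 := by positivity
  calc _ = ∫ θ in (0:ℝ)..π, ∫ φ in (0:ℝ)..2 * π, (cos θ : ℂ) * Complex.exp (Complex.I
          * (√((k * z 0) ^ 2 + (k * z 1) ^ 2) * sin θ * cos φ + k * z 2 * cos θ : ℝ))
          * (sin θ : ℂ) := by
        refine intervalIntegral.integral_congr fun θ hθ => ?_
        rw [Set.uIcc_of_le pi_pos.le] at hθ
        rw [← integral_cos_mul_exp_mul_sin_rotate _ _ _ θ (sin_nonneg_of_nonneg_of_le_pi hθ.1 hθ.2)]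
        congr 1 with φ
        push_cast
        ring_nf
    _ = _ := by
        rw [integral_sphere_cos_mul_exp _ _ (hnorm ▸ hkz), hnorm, hα, mul_div_mul_left _ _ hk.ne']
end

section
/- For 0 < t < 1, j_0(t) + j_2(t) < 1 - t^2/10 + t^4/120 < 1, where j_0(t) = sin(t)/t and j_2(t) = (3/t^3 - 1/t) sin t - (3/t^2) cos t are spherical Bessel functions of orders 0 and 2. -/
/-- Spherical Bessel function of order 0. -/
noncomputable def sphBesselj0 (t : ℝ) : ℝ := Real.sin t / t

/-!
We have `j₀ t + j₂ t = 3 (sin t - t cos t) / t³`. Comparing derivatives three times, starting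
from `x - x³/6 < sin x`, gives the Taylor bounds `sin t < t - t³/6 + t⁵/120` and
`1 - t²/2 + t⁴/24 - t⁶/720 < cos t` for `t > 0`, hence
`3 (sin t - t cos t) < t³ - t⁵/10 + t⁷/240`.
-/

open Real Set

theorem lt_of_le_of_deriv_lt {f g : ℝ → ℝ} (hf : Differentiable ℝ f) (hg : Differentiable ℝ g)
    {a x : ℝ} (ha : f a ≤ g a) (hd : ∀ y, a < y → deriv f y < deriv g y) (hx : a < x) :
    f x < g x := by
  have hmono : StrictMonoOn (g - f) (Ici a) := by
    refine strictMonoOn_of_deriv_pos (convex_Ici a) (hg.sub hf).continuous.continuousOn ?_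
    intro y hy
    rw [interior_Ici] at hy
    rw [deriv_sub (hg y) (hf y), sub_pos]
    exact hd y hy
  have := hmono self_mem_Ici hx.le hx
  simp only [Pi.sub_apply] at this
  linarith

namespace Real

theorem cos_lt_quartic {x : ℝ} (hx : 0 < x) : cos x < 1 - x ^ 2 / 2 + x ^ 4 / 24 := by
  refine lt_of_le_of_deriv_lt (f := cos) (g := fun y => 1 - y ^ 2 / 2 + y ^ 4 / 24)
    (by fun_prop) (by fun_prop) (by simp) (fun y hy => ?_) hx
  have := sin_gt_sub_cube hy
  simp (disch := fun_prop)
  linarith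

theorem sin_lt_quintic {x : ℝ} (hx : 0 < x) : sin x < x - x ^ 3 / 6 + x ^ 5 / 120 := by
  refine lt_of_le_of_deriv_lt (f := sin) (g := fun y => y - y ^ 3 / 6 + y ^ 5 / 120)
    (by fun_prop) (by fun_prop) (by simp) (fun y hy => ?_) hx
  have := cos_lt_quartic hy
  simp (disch := fun_prop)
  linarith

theorem sextic_lt_cos {x : ℝ} (hx : 0 < x) :
    1 - x ^ 2 / 2 + x ^ 4 / 24 - x ^ 6 / 720 < cos x := by
  refine lt_of_le_of_deriv_lt (f := fun y => 1 - y ^ 2 / 2 + y ^ 4 / 24 - y ^ 6 / 720) (g := cos)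
    (by fun_prop) (by fun_prop) (by simp) (fun y hy => ?_) hx
  have := sin_lt_quintic hy
  simp (disch := fun_prop)
  linarith

end Real

theorem sphBesselj0_add_sphBesselj2 {t : ℝ} (ht : t ≠ 0) :
    sphBesselj0 t + sphBesselj2 t = 3 * (sin t - t * cos t) / t ^ 3 := by
  unfold sphBesselj0 sphBesselj2
  field_simp
  ring

theorem sphBesselj0_add_sphBesselj2_lt {t : ℝ} (ht : 0 < t) :
    sphBesselj0 t + sphBesselj2 t < 1 - t ^ 2 / 10 + t ^ 4 / 120 := by
  rw [sphBesselj0_add_sphBesselj2 ht.ne', div_lt_iff₀ (by positivity)]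
  have hsin := sin_lt_quintic ht
  have hcos := mul_lt_mul_of_pos_left (sextic_lt_cos ht) ht
  linarith [pow_pos ht 7]

theorem sphBesselj0_add_j2_lt (t : ℝ) (h0 : 0 < t) (h1 : t < 1) :
    sphBesselj0 t + sphBesselj2 t < 1 - t^2/10 + t^4/120 ∧ 1 - t^2/10 + t^4/120 < 1 := by
  refine ⟨sphBesselj0_add_sphBesselj2_lt h0, ?_⟩
  have ht2 : t ^ 2 < 1 := by nlinarith
  nlinarith [pow_pos h0 2]
end
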